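/- Hyperbolicity from convexity: Let s(ρ,e) be a C² entropy with s_e > 0 satisfying the convexity conditions ∂_ρ(ρ² s_ρ) < 0, s_{ee} < 0, and ∂_ρ(ρ² s_ρ)·s_{ee} − ρ² s_{ρe}² > 0. Then the squared sound speed c² := p_ρ − (s_ρ/s_e) p_e = ρ² s_e^{−3}( 2 s_e s_ρ s_{ρe} − s_e² ρ^{−2} ∂_ρ(ρ² s_ρ) − s_ρ² s_{ee} ) is strictly positive at every (ρ,e) ∈ (0,∞)². No sign assumption on the pressure p := −ρ² s_ρ/s_e is needed. -/

import Mathlib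

/-!
With `a = s_ρ`, `b = s_e`, `K = ∂_ρ(ρ² s_ρ)`, `E = s_{ρe}` and `B = s_{ee}`, the quotient rule
and the symmetry of the mixed partials give `c² = -(K b² - 2 ρ² E a b + ρ² B a²) / b³`. The
numerator is the quadratic form of the symmetric matrix `[[K, -ρ² E], [-ρ² E, ρ² B]]` at `(b, a)`;
its determinant is `ρ² det Σ > 0` and `ρ² B < 0`, so the form is negative definite, and `b > 0`
gives `c² > 0`.
-/

noncomputable section

open Real

/-- Partial derivative with respect to the first variable (`ρ`). -/
def D1 (f : ℝ × ℝ → ℝ) (x : ℝ × ℝ) : ℝ := fderiv ℝ f x (1, 0)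

/-- Partial derivative with respect to the second variable (`e`). -/
def D2 (f : ℝ × ℝ → ℝ) (x : ℝ × ℝ) : ℝ := fderiv ℝ f x (0, 1)

/-- The state domain `(0,∞)²`. -/
def dom : Set (ℝ × ℝ) := {x : ℝ × ℝ | 0 < x.1 ∧ 0 < x.2}

/-- `s_ρ` -/
def sRho (s : ℝ × ℝ → ℝ) : ℝ × ℝ → ℝ := D1 s

/-- `s_e` -/
def sE (s : ℝ × ℝ → ℝ) : ℝ × ℝ → ℝ := D2 s

/-- `s_{ρe}` -/
def sRhoE (s : ℝ × ℝ → ℝ) : ℝ × ℝ → ℝ := D1 (D2 s)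

/-- `s_{ee}` -/
def sEE (s : ℝ × ℝ → ℝ) : ℝ × ℝ → ℝ := D2 (D2 s)

/-- The pressure `p := -ρ² s_ρ / s_e`. -/
def press (s : ℝ × ℝ → ℝ) (x : ℝ × ℝ) : ℝ := -x.1 ^ 2 * sRho s x / sE s x

/-- The temperature `T := 1 / s_e`. -/
def temp (s : ℝ × ℝ → ℝ) (x : ℝ × ℝ) : ℝ := (sE s x)⁻¹

/-- `∂_ρ(ρ² s_ρ)` -/
def dRho2sRho (s : ℝ × ℝ → ℝ) (x : ℝ × ℝ) : ℝ :=
  deriv (fun r : ℝ => r ^ 2 * sRho s (r, x.2)) x.1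

/-- `det Σ := ∂_ρ(ρ² s_ρ)·s_{ee} - ρ² s_{ρe}²`. -/
def detSigma (s : ℝ × ℝ → ℝ) (x : ℝ × ℝ) : ℝ :=
  dRho2sRho s x * sEE s x - x.1 ^ 2 * (sRhoE s x) ^ 2

/-- `p_ρ` -/
def pRho (s : ℝ × ℝ → ℝ) : ℝ × ℝ → ℝ := D1 (press s)

/-- `p_e` -/
def pE (s : ℝ × ℝ → ℝ) : ℝ × ℝ → ℝ := D2 (press s)

/-- `T_ρ` -/
def tRho (s : ℝ × ℝ → ℝ) : ℝ × ℝ → ℝ := D1 (temp s)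

/-- `T_e` -/
def tE (s : ℝ × ℝ → ℝ) : ℝ × ℝ → ℝ := D2 (temp s)

/-- The specific heat at constant pressure
`c_p := s_e⁻¹ (p_ρ s_e - p_e s_ρ) / (p_ρ T_e - p_e T_ρ)`. -/
def cP (s : ℝ × ℝ → ℝ) (x : ℝ × ℝ) : ℝ :=
  (sE s x)⁻¹ * (pRho s x * sE s x - pE s x * sRho s x) /
    (pRho s x * tE s x - pE s x * tRho s x)

/-- The squared sound speed `c² := p_ρ - (s_ρ/s_e) p_e`. -/
def cSq (s : ℝ × ℝ → ℝ) (x : ℝ × ℝ) : ℝ := pRho s x - sRho s x / sE s x * pE s x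

/-- The convexity conditions `∂_ρ(ρ² s_ρ) < 0`, `s_{ee} < 0`, `det Σ > 0` on the domain. -/
def Convexity (s : ℝ × ℝ → ℝ) : Prop :=
  ∀ x ∈ dom, dRho2sRho s x < 0 ∧ sEE s x < 0 ∧ 0 < detSigma s x

lemma isOpen_dom : IsOpen dom :=
  (isOpen_lt continuous_const continuous_fst).inter (isOpen_lt continuous_const continuous_snd)

lemma quadratic_neg_of_sq_lt_mul {p m q u v : ℝ} (hq : q < 0) (hdet : m ^ 2 < p * q)
    (hu : u ≠ 0) : p * u ^ 2 + 2 * m * u * v + q * v ^ 2 < 0 := by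
  have hmul : 0 < q * (p * u ^ 2 + 2 * m * u * v + q * v ^ 2) := by
    have hsplit : q * (p * u ^ 2 + 2 * m * u * v + q * v ^ 2)
        = (q * v + m * u) ^ 2 + (p * q - m ^ 2) * u ^ 2 := by ring
    rw [hsplit]
    exact add_pos_of_nonneg_of_pos (sq_nonneg _) (mul_pos (sub_pos.2 hdet) (sq_pos_of_ne_zero hu))
  exact neg_of_mul_pos_right hmul hq.le

section Partials

variable {f : ℝ × ℝ → ℝ} {x : ℝ × ℝ}

lemma DifferentiableAt.hasDerivAt_D1 (hf : DifferentiableAt ℝ f x) :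
    HasDerivAt (fun r => f (r, x.2)) (D1 f x) x.1 :=
  hf.hasFDerivAt.comp_hasDerivAt x.1 ((hasDerivAt_id x.1).prodMk (hasDerivAt_const x.1 x.2))

lemma DifferentiableAt.hasDerivAt_D2 (hf : DifferentiableAt ℝ f x) :
    HasDerivAt (fun t => f (x.1, t)) (D2 f x) x.2 :=
  hf.hasFDerivAt.comp_hasDerivAt x.2 ((hasDerivAt_const x.2 x.1).prodMk (hasDerivAt_id x.2))

lemma ContDiffAt.differentiableAt_fderiv_apply (hf : ContDiffAt ℝ 2 f x) (v : ℝ × ℝ) :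
    DifferentiableAt ℝ (fun y => fderiv ℝ f y v) x :=
  ((hf.fderiv_right le_rfl).differentiableAt one_ne_zero).clm_apply (differentiableAt_const v)

lemma ContDiffAt.D2_D1_eq_D1_D2 (hf : ContDiffAt ℝ 2 f x) : D2 (D1 f) x = D1 (D2 f) x := by
  have hdf : DifferentiableAt ℝ (fderiv ℝ f) x :=
    (hf.fderiv_right le_rfl).differentiableAt one_ne_zero
  have hcurry (v w : ℝ × ℝ) :
      fderiv ℝ (fun y => fderiv ℝ f y v) x w = fderiv ℝ (fderiv ℝ f) x w v := by
    simp [fderiv_clm_apply hdf (differentiableAt_const v)]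
  show fderiv ℝ (fun y => fderiv ℝ f y (1, 0)) x (0, 1)
    = fderiv ℝ (fun y => fderiv ℝ f y (0, 1)) x (1, 0)
  rw [hcurry, hcurry]
  exact hf.isSymmSndFDerivAt (by simp) _ _

end Partials

section Thermodynamics

variable {s : ℝ × ℝ → ℝ} {x : ℝ × ℝ}

lemma hasDerivAt_dRho2sRho (hs : ContDiffAt ℝ 2 s x) :
    HasDerivAt (fun r => r ^ 2 * sRho s (r, x.2)) (dRho2sRho s x) x.1 :=
  ((hasDerivAt_pow 2 x.1).mul
    (hs.differentiableAt_fderiv_apply (1, 0)).hasDerivAt_D1).differentiableAt.hasDerivAt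

lemma differentiableAt_press (hs : ContDiffAt ℝ 2 s x) (hb : sE s x ≠ 0) :
    DifferentiableAt ℝ (press s) x := by
  have hnum : DifferentiableAt ℝ (fun y : ℝ × ℝ => -y.1 ^ 2 * sRho s y) x :=
    (differentiableAt_fst.pow 2).neg.mul (hs.differentiableAt_fderiv_apply (1, 0))
  unfold press
  simp only [div_eq_mul_inv]
  exact hnum.mul ((hs.differentiableAt_fderiv_apply (0, 1)).inv hb)

lemma pRho_eq (hs : ContDiffAt ℝ 2 s x) (hb : sE s x ≠ 0) :
    pRho s x = (-dRho2sRho s x * sE s x + x.1 ^ 2 * sRho s x * sRhoE s x) / sE s x ^ 2 := by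
  have hline : (fun r => press s (r, x.2))
      = fun r => -(r ^ 2 * sRho s (r, x.2)) / sE s (r, x.2) := by
    funext r; simp only [press]; ring
  have h : HasDerivAt (fun r => press s (r, x.2))
      ((-dRho2sRho s x * sE s x - -(x.1 ^ 2 * sRho s x) * sRhoE s x) / sE s x ^ 2) x.1 :=
    hline ▸ (hasDerivAt_dRho2sRho hs).neg.div
      (hs.differentiableAt_fderiv_apply (0, 1)).hasDerivAt_D1 hb
  rw [pRho, (differentiableAt_press hs hb).hasDerivAt_D1.unique h]
  ring

lemma pE_eq (hs : ContDiffAt ℝ 2 s x) (hb : sE s x ≠ 0) :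
    pE s x = x.1 ^ 2 * (sRho s x * sEE s x - sRhoE s x * sE s x) / sE s x ^ 2 := by
  have h : HasDerivAt (fun t => press s (x.1, t))
      (((0 * sRho s x + -x.1 ^ 2 * D2 (sRho s) x) * sE s x - -x.1 ^ 2 * sRho s x * sEE s x)
        / sE s x ^ 2) x.2 :=
    ((hasDerivAt_const x.2 (-x.1 ^ 2)).mul
      (hs.differentiableAt_fderiv_apply (1, 0)).hasDerivAt_D2).div
      (hs.differentiableAt_fderiv_apply (0, 1)).hasDerivAt_D2 hb
  rw [pE, (differentiableAt_press hs hb).hasDerivAt_D2.unique h, sRho, hs.D2_D1_eq_D1_D2, sRhoE]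
  ring

lemma cSq_eq_neg_div (hs : ContDiffAt ℝ 2 s x) (hb : sE s x ≠ 0) :
    cSq s x = -(dRho2sRho s x * sE s x ^ 2 + 2 * -(x.1 ^ 2 * sRhoE s x) * sE s x * sRho s x
      + x.1 ^ 2 * sEE s x * sRho s x ^ 2) / sE s x ^ 3 := by
  rw [cSq, pRho_eq hs hb, pE_eq hs hb]
  field_simp
  ring

lemma cSq_eq (hs : ContDiffAt ℝ 2 s x) (hb : sE s x ≠ 0) (hρ : x.1 ≠ 0) :
    cSq s x = x.1 ^ 2 / (sE s x) ^ 3 *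
      (2 * sE s x * sRho s x * sRhoE s x - (sE s x) ^ 2 / x.1 ^ 2 * dRho2sRho s x
        - (sRho s x) ^ 2 * sEE s x) := by
  rw [cSq_eq_neg_div hs hb]
  field_simp
  ring

end Thermodynamics

/-- **Hyperbolicity from convexity:** under the convexity conditions and `s_e > 0`
(no sign assumption on the pressure), the squared sound speed
`c² = p_ρ - (s_ρ/s_e) p_e = ρ² s_e⁻³(2 s_e s_ρ s_{ρe} - s_e² ρ⁻² ∂_ρ(ρ² s_ρ) - s_ρ² s_{ee})`
is strictly positive. -/
theorem hyperbolicity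
    (s : ℝ × ℝ → ℝ) (hs : ContDiffOn ℝ 2 s dom)
    (hse : ∀ x ∈ dom, 0 < sE s x) (hconv : Convexity s) :
    ∀ x ∈ dom,
      cSq s x = x.1 ^ 2 / (sE s x) ^ 3 *
        (2 * sE s x * sRho s x * sRhoE s x - (sE s x) ^ 2 / x.1 ^ 2 * dRho2sRho s x
          - (sRho s x) ^ 2 * sEE s x) ∧
      0 < cSq s x := by
  intro x hx
  have hsx : ContDiffAt ℝ 2 s x := hs.contDiffAt (isOpen_dom.mem_nhds hx)
  have hb : 0 < sE s x := hse x hx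
  have hρ : 0 < x.1 := hx.1
  obtain ⟨-, hB, hdet⟩ := hconv x hx
  have hdet' : (-(x.1 ^ 2 * sRhoE s x)) ^ 2 < dRho2sRho s x * (x.1 ^ 2 * sEE s x) := by
    have h := mul_pos (pow_pos hρ 2) hdet
    rw [detSigma] at h
    linarith
  have hform := quadratic_neg_of_sq_lt_mul (v := sRho s x)
    (mul_neg_of_pos_of_neg (pow_pos hρ 2) hB) hdet' hb.ne'
  refine ⟨cSq_eq hsx hb.ne' hρ.ne', ?_⟩
  rw [cSq_eq_neg_div hsx hb.ne']
  exact div_pos (neg_pos.2 hform) (pow_pos hb 3)
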